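/- arXiv:1704.05218 — 10 statements merged into one kernel-verified Lean document; each statement's English description precedes it below -/
import Mathlib

section
/- Every eigenvalue z of an n×n complex matrix A (n ≥ 2) lies in the union over pairs i ≠ j of the Brauer ovals {z ∈ ℂ : |z - a_{ii}| · |z - a_{jj}| ≤ (Σ_{k≠i} |a_{ki}|)(Σ_{k≠j} |a_{kj}|)}, where the radii use column sums. -/
/-!
Take a left eigenvector `v` for `z`, i.e. an eigenvector of `Aᵀ`, let `i` be a coordinate where
`‖v i‖` is largest and `j` one where it is largest among the others. With `R_p` the deleted
column sum, column `p` of the eigen-equation gives `‖z - A p p‖ ‖v p‖ ≤ R_p · max_{k ≠ p} ‖v k‖`,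
so `‖z - A i i‖ ‖v i‖ ≤ R_i ‖v j‖` and `‖z - A j j‖ ‖v j‖ ≤ R_j ‖v i‖`; multiplying the two and
cancelling `‖v i‖ ‖v j‖` gives the oval for `(i, j)` (if `v j = 0`, the first inequality already
forces `z = A i i`).
-/

open Finset Matrix

theorem Matrix.exists_vecMul_eq_smul_of_mem_spectrum {ι K : Type*} [Fintype ι] [DecidableEq ι]
    [Field K] {A : Matrix ι ι K} {z : K} (hz : z ∈ spectrum K A) :
    ∃ v ≠ 0, v ᵥ* A = z • v := by
  rw [spectrum.mem_iff, Matrix.isUnit_iff_isUnit_det, isUnit_iff_ne_zero, not_not] at hz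
  obtain ⟨v, hv0, hv⟩ := exists_vecMul_eq_zero_iff.mpr hz
  refine ⟨v, hv0, ?_⟩
  rw [vecMul_sub, sub_eq_zero, algebraMap_eq_diagonal] at hv
  rw [← hv]
  ext k
  simp [vecMul_diagonal, mul_comm]

theorem exists_max_and_max_erase {ι : Type*} [Fintype ι] [Nontrivial ι] (f : ι → ℝ) :
    ∃ i j, i ≠ j ∧ (∀ k, f k ≤ f i) ∧ ∀ k ≠ i, f k ≤ f j := by
  classical
  obtain ⟨i, -, hi⟩ := exists_max_image univ f univ_nonempty
  obtain ⟨j, hj, hjmax⟩ := exists_max_image (univ.erase i) f univ_nontrivial.erase_nonempty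
  exact ⟨i, j, (ne_of_mem_erase hj).symm, fun k => hi k (mem_univ k),
    fun k hk => hjmax k (mem_erase.mpr ⟨hk, mem_univ k⟩)⟩

theorem mul_le_mul_of_cross_le {a b R S x y : ℝ} (ha : 0 ≤ a) (hb : 0 ≤ b) (hR : 0 ≤ R)
    (hS : 0 ≤ S) (hx : 0 < x) (hy : 0 ≤ y) (h₁ : a * x ≤ R * y) (h₂ : b * y ≤ S * x) :
    a * b ≤ R * S := by
  rcases hy.eq_or_lt with rfl | hy
  · have : a = 0 := by nlinarith
    simp [this, mul_nonneg hR hS]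
  · have := mul_le_mul h₁ h₂ (by positivity) (by positivity)
    nlinarith [mul_pos hx hy]

section
variable {ι K : Type*} [Fintype ι] [DecidableEq ι] [NormedField K]

theorem Matrix.sub_diag_mul_eq_sum_erase {A : Matrix ι ι K} {z : K} {v : ι → K}
    (hv : v ᵥ* A = z • v) (p : ι) :
    (z - A p p) * v p = ∑ k ∈ univ.erase p, A k p * v k := by
  have h := congrFun hv p
  rw [vecMul, dotProduct, ← add_sum_erase _ _ (mem_univ p)] at h
  simp only [Pi.smul_apply, smul_eq_mul] at h
  rw [sub_mul, ← h]
  simp [mul_comm]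

theorem Matrix.norm_sub_diag_mul_le {A : Matrix ι ι K} {z : K} {v : ι → K}
    (hv : v ᵥ* A = z • v) {p : ι} {b : ℝ} (hb : ∀ k ≠ p, ‖v k‖ ≤ b) :
    ‖z - A p p‖ * ‖v p‖ ≤ (∑ k ∈ univ.erase p, ‖A k p‖) * b := by
  rw [← norm_mul, sub_diag_mul_eq_sum_erase hv, sum_mul]
  refine (norm_sum_le _ _).trans (sum_le_sum fun k hk => ?_)
  rw [norm_mul]
  exact mul_le_mul_of_nonneg_left (hb k (ne_of_mem_erase hk)) (norm_nonneg _)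

theorem Matrix.exists_brauer_column [Nontrivial ι] {A : Matrix ι ι K} {z : K}
    (hz : z ∈ spectrum K A) :
    ∃ i j, i ≠ j ∧ ‖z - A i i‖ * ‖z - A j j‖ ≤
      (∑ k ∈ univ.erase i, ‖A k i‖) * ∑ k ∈ univ.erase j, ‖A k j‖ := by
  obtain ⟨v, hv0, hv⟩ := exists_vecMul_eq_smul_of_mem_spectrum hz
  obtain ⟨i, j, hij, hi, hj⟩ := exists_max_and_max_erase fun k => ‖v k‖
  have hvi : 0 < ‖v i‖ := by
    obtain ⟨k, hk⟩ := Function.ne_iff.mp hv0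
    exact (norm_pos_iff.mpr hk).trans_le (hi k)
  exact ⟨i, j, hij, mul_le_mul_of_cross_le (norm_nonneg _) (norm_nonneg _)
    (sum_nonneg fun _ _ => norm_nonneg _) (sum_nonneg fun _ _ => norm_nonneg _) hvi
    (norm_nonneg _) (norm_sub_diag_mul_le hv hj) (norm_sub_diag_mul_le hv fun k _ => hi k)⟩

end

/-- Brauer's ovals of Cassini (column version): every eigenvalue `z` of an `n × n`
complex matrix `A` (`n ≥ 2`) satisfies
`|z - a_ii| * |z - a_jj| ≤ (∑_{k≠i} |a_ki|) * (∑_{k≠j} |a_kj|)` for some pair `i ≠ j`. -/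
theorem brauer_ovals_column {n : ℕ} (hn : 2 ≤ n) (A : Matrix (Fin n) (Fin n) ℂ)
    (z : ℂ) (hz : z ∈ spectrum ℂ A) :
    ∃ i j : Fin n, i ≠ j ∧
      ‖z - A i i‖ * ‖z - A j j‖ ≤
        (∑ k ∈ univ.erase i, ‖A k i‖) *
          (∑ k ∈ univ.erase j, ‖A k j‖) :=
  have := Fin.nontrivial_iff_two_le.mpr hn
  exists_brauer_column hz
end

section
/- If A is a strictly diagonally dominant matrix with positive diagonal entries and nonpositive off-diagonal entries, then for each i, the diagonal entry α_{ii} of A^{-1} satisfies α_{ii} ≥ 1/(a_{ii} - Σ_{k≠i} a_{ik} a_{ki} / a_{kk}). -/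
/-!
Let `x` be the `i`-th column of `A⁻¹`, so `x ≥ 0` and `A x = eᵢ`. Since the off-diagonal entries
of `A` are nonpositive, dropping terms from a row of `A x` can only increase it. Row `k ≠ i`
gives `0 ≤ a_kk x_k + a_ki x_i`, i.e. `x_k ≥ -a_ki x_i / a_kk`, and row `i` then gives
`1 ≤ (a_ii - ∑_{k≠i} a_ik a_ki / a_kk) x_i`, which forces the bracket to be positive.
-/

open Finset

namespace Matrix

variable {ι R : Type*}

def IsZMatrix [Zero R] [LE R] (A : Matrix ι ι R) : Prop := ∀ i j, i ≠ j → A i j ≤ 0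

section OrderedSemiring

variable [Fintype ι] [Semiring R] [PartialOrder R] [IsOrderedRing R] {A B : Matrix ι ι R}

theorem IsZMatrix.mul_apply_le_sum (hA : A.IsZMatrix) (hB : ∀ i j, 0 ≤ B i j)
    {s : Finset ι} {k : ι} (hk : k ∈ s) (i : ι) :
    (A * B) k i ≤ ∑ j ∈ s, A k j * B j i := by
  rw [mul_apply]
  refine sum_le_sum_of_subset_of_nonpos' (subset_univ s) fun j _ hj => ?_
  exact mul_nonpos_of_nonpos_of_nonneg (hA k j (ne_of_mem_of_not_mem hk hj)) (hB j i)

variable [DecidableEq ι]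

theorem IsZMatrix.one_le_mul_diag_of_mul_eq_one (hA : A.IsZMatrix) (hB : ∀ i j, 0 ≤ B i j)
    (hAB : A * B = 1) (k : ι) : 1 ≤ A k k * B k k := by
  simpa [hAB] using hA.mul_apply_le_sum hB (mem_singleton_self k) k

end OrderedSemiring

variable [Fintype ι] [DecidableEq ι] [Field R] [LinearOrder R] [IsStrictOrderedRing R]
  {A B : Matrix ι ι R}

theorem IsZMatrix.diag_pos_of_mul_eq_one (hA : A.IsZMatrix) (hB : ∀ i j, 0 ≤ B i j)
    (hAB : A * B = 1) (k : ι) : 0 < A k k :=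
  pos_of_mul_pos_left (one_pos.trans_le (hA.one_le_mul_diag_of_mul_eq_one hB hAB k)) (hB k k)

theorem IsZMatrix.neg_mul_div_diag_le_of_mul_eq_one (hA : A.IsZMatrix) (hB : ∀ i j, 0 ≤ B i j)
    (hAB : A * B = 1) {i k : ι} (hki : k ≠ i) : -A k i * B i i / A k k ≤ B k i := by
  have hrow : 0 ≤ A k k * B k i + A k i * B i i := by
    simpa [hAB, one_apply_ne hki, sum_pair hki] using
      hA.mul_apply_le_sum hB (mem_insert_self k {i}) i
  rw [div_le_iff₀ (hA.diag_pos_of_mul_eq_one hB hAB k)]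
  linarith

theorem IsZMatrix.one_le_sub_sum_div_diag_mul_of_mul_eq_one (hA : A.IsZMatrix)
    (hB : ∀ i j, 0 ≤ B i j) (hAB : A * B = 1) (i : ι) :
    1 ≤ (A i i - ∑ k ∈ univ.erase i, A i k * A k i / A k k) * B i i := by
  have hterm : ∀ k ∈ univ.erase i, A i k * B k i ≤ -(A i k * A k i / A k k) * B i i := by
    intro k hk
    have hki := ne_of_mem_erase hk
    calc A i k * B k i ≤ A i k * (-A k i * B i i / A k k) :=
          mul_le_mul_of_nonpos_left (hA.neg_mul_div_diag_le_of_mul_eq_one hB hAB hki)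
            (hA i k hki.symm)
      _ = -(A i k * A k i / A k k) * B i i := by ring
  calc (1 : R) = A i i * B i i + ∑ k ∈ univ.erase i, A i k * B k i := by
        rw [add_sum_erase _ (fun k => A i k * B k i) (mem_univ i), ← mul_apply, hAB,
          one_apply_eq]
    _ ≤ A i i * B i i + ∑ k ∈ univ.erase i, -(A i k * A k i / A k k) * B i i :=
        add_le_add_right (sum_le_sum hterm) _
    _ = (A i i - ∑ k ∈ univ.erase i, A i k * A k i / A k k) * B i i := by
        rw [← sum_mul, sum_neg_distrib]; ring

end Matrix

theorem inv_diag_lower_bound_general {n : ℕ} (A : Matrix (Fin n) (Fin n) ℝ)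
    (hA : IsUnit A.det)
    (hoff : ∀ i j, i ≠ j → A i j ≤ 0)
    (hinv : ∀ i j, 0 ≤ A⁻¹ i j) :
    ∀ i, 1 / (A i i - ∑ k ∈ univ.erase i, A i k * A k i / A k k) ≤ A⁻¹ i i := by
  intro i
  have hbound := Matrix.IsZMatrix.one_le_sub_sum_div_diag_mul_of_mul_eq_one hoff hinv
    (A.mul_nonsing_inv hA) i
  have hpos : 0 < A i i - ∑ k ∈ univ.erase i, A i k * A k i / A k k :=
    pos_of_mul_pos_left (one_pos.trans_le hbound) (hinv i i)
  rwa [div_le_iff₀' hpos]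

/-- If `A` is a strictly diagonally dominant nonsingular `M`-matrix, then each diagonal entry
of `A⁻¹` satisfies `α_ii ≥ 1 / (a_ii - ∑_{k≠i} a_ik a_ki / a_kk)`. -/
theorem inv_diag_lower_bound {n : ℕ} (A : Matrix (Fin n) (Fin n) ℝ)
    (hA : IsUnit A.det)
    (hoff : ∀ i j, i ≠ j → A i j ≤ 0)
    (hinv : ∀ i j, 0 ≤ A⁻¹ i j)
    (hsdd : ∀ i, ∑ j ∈ univ.erase i, |A i j| < A i i) :
    ∀ i, 1 / (A i i - ∑ k ∈ univ.erase i, A i k * A k i / A k k) ≤ A⁻¹ i i :=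
  inv_diag_lower_bound_general A hA hoff hinv
end

section
/- If A is a strictly diagonally dominant M-matrix, then for each i, the diagonal entries of the inverse satisfy 1/a_{ii} ≤ α_{ii} ≤ 1/(a_{ii} - Σ_{k≠i} |a_{ik}| d_k), where d_k = Σ_{j≠k} |a_{kj}| / a_{kk}. -/
/-!
Let `x` be the `i`-th column of `A⁻¹`, so `A x = eᵢ` and `x ≥ 0`. Since the off-diagonal entries
are nonpositive, row `j ≠ i` reads `a_jj x_j = ∑_{k≠j} |a_jk| x_k`; by strict diagonal dominance
the maximum of `x` is therefore attained at `i`, and then `x_j ≤ d_j x_i`. Row `i` reads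
`a_ii x_i = 1 + ∑_{k≠i} |a_ik| x_k`, and the right side lies between `1` and
`1 + (∑_{k≠i} |a_ik| d_k) x_i`.
-/

open Finset

namespace Matrix

variable {ι 𝕜 : Type*} [Fintype ι] [DecidableEq ι] [Field 𝕜] [LinearOrder 𝕜]
  [IsStrictOrderedRing 𝕜] {A : Matrix ι ι 𝕜} {x : ι → 𝕜}

theorem mulVec_apply_eq_diag_sub_sum_abs (hoff : ∀ i j, i ≠ j → A i j ≤ 0) (j : ι) :
    (A *ᵥ x) j = A j j * x j - ∑ k ∈ univ.erase j, |A j k| * x k := by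
  rw [mulVec, dotProduct, ← add_sum_erase _ _ (mem_univ j), sub_eq_add_neg, ← sum_neg_distrib]
  congr 1
  refine sum_congr rfl fun k hk => ?_
  rw [abs_of_nonpos (hoff j k (ne_of_mem_erase hk).symm), neg_mul, neg_neg]

theorem diag_mul_le_of_mulVec_apply_nonpos (hoff : ∀ i j, i ≠ j → A i j ≤ 0) {j : ι}
    (hj : (A *ᵥ x) j ≤ 0) {M : 𝕜} (hM : ∀ k, x k ≤ M) :
    A j j * x j ≤ (∑ k ∈ univ.erase j, |A j k|) * M := by
  calc A j j * x j ≤ ∑ k ∈ univ.erase j, |A j k| * x k := by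
        linarith [mulVec_apply_eq_diag_sub_sum_abs (x := x) hoff j]
    _ ≤ ∑ k ∈ univ.erase j, |A j k| * M :=
        sum_le_sum fun k _ => mul_le_mul_of_nonneg_left (hM k) (abs_nonneg _)
    _ = (∑ k ∈ univ.erase j, |A j k|) * M := (sum_mul ..).symm

theorem apply_le_apply_of_mulVec_apply_nonpos (hoff : ∀ i j, i ≠ j → A i j ≤ 0)
    (hsdd : ∀ i, ∑ j ∈ univ.erase i, |A i j| < A i i) (hx : 0 ≤ x) {i : ι}
    (hAx : ∀ j, j ≠ i → (A *ᵥ x) j ≤ 0) (k : ι) : x k ≤ x i := by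
  obtain ⟨j, -, hj⟩ := exists_max_image univ x ⟨i, mem_univ i⟩
  have hmax : ∀ k, x k ≤ x j := fun k => hj k (mem_univ k)
  obtain rfl | hji := eq_or_ne j i
  · exact hmax k
  -- a maximum at `j ≠ i` can only be `0`, by strict dominance of row `j`
  have hrow := diag_mul_le_of_mulVec_apply_nonpos hoff (hAx j hji) hmax
  have hxj : x j ≤ 0 := by nlinarith [hsdd j, hx j]
  have hxi : 0 ≤ x i := hx i
  linarith [hmax k]

theorem apply_le_div_mul_of_mulVec_apply_nonpos (hoff : ∀ i j, i ≠ j → A i j ≤ 0)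
    (hsdd : ∀ i, ∑ j ∈ univ.erase i, |A i j| < A i i) (hx : 0 ≤ x) {i : ι}
    (hAx : ∀ j, j ≠ i → (A *ᵥ x) j ≤ 0) {j : ι} (hji : j ≠ i) :
    x j ≤ (∑ k ∈ univ.erase j, |A j k|) / A j j * x i := by
  have hdiag : 0 < A j j := (sum_nonneg fun _ _ => abs_nonneg _).trans_lt (hsdd j)
  rw [div_mul_eq_mul_div, le_div_iff₀ hdiag, mul_comm]
  exact diag_mul_le_of_mulVec_apply_nonpos hoff (hAx j hji)
    (apply_le_apply_of_mulVec_apply_nonpos hoff hsdd hx hAx)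

theorem one_le_diag_mul_of_mulVec_apply_eq_one (hoff : ∀ i j, i ≠ j → A i j ≤ 0) (hx : 0 ≤ x)
    {i : ι} (hAx : (A *ᵥ x) i = 1) : 1 ≤ A i i * x i := by
  have := mulVec_apply_eq_diag_sub_sum_abs (x := x) hoff i
  have : 0 ≤ ∑ k ∈ univ.erase i, |A i k| * x k :=
    sum_nonneg fun k _ => mul_nonneg (abs_nonneg _) (hx k)
  linarith

theorem sub_sum_abs_mul_div_mul_le_one (hoff : ∀ i j, i ≠ j → A i j ≤ 0)
    (hsdd : ∀ i, ∑ j ∈ univ.erase i, |A i j| < A i i) (hx : 0 ≤ x) {i : ι}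
    (hAx : ∀ j, (A *ᵥ x) j = if j = i then 1 else 0) :
    (A i i - ∑ k ∈ univ.erase i, |A i k| * ((∑ j ∈ univ.erase k, |A k j|) / A k k)) * x i
      ≤ 1 := by
  have hoffcol : ∀ j, j ≠ i → (A *ᵥ x) j ≤ 0 := fun j hj => by simp [hAx j, hj]
  have hrow := mulVec_apply_eq_diag_sub_sum_abs (x := x) hoff i
  have : ∑ k ∈ univ.erase i, |A i k| * x k
      ≤ ∑ k ∈ univ.erase i, |A i k| * ((∑ j ∈ univ.erase k, |A k j|) / A k k) * x i :=
    sum_le_sum fun k hk => by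
      rw [mul_assoc]
      exact mul_le_mul_of_nonneg_left
        (apply_le_div_mul_of_mulVec_apply_nonpos hoff hsdd hx hoffcol (ne_of_mem_erase hk))
        (abs_nonneg _)
  rw [← sum_mul] at this
  rw [hAx i, if_pos rfl] at hrow
  linarith

theorem sum_abs_mul_div_lt_diag (hsdd : ∀ i, ∑ j ∈ univ.erase i, |A i j| < A i i) (i : ι) :
    ∑ k ∈ univ.erase i, |A i k| * ((∑ j ∈ univ.erase k, |A k j|) / A k k) < A i i := by
  refine lt_of_le_of_lt (sum_le_sum fun k _ => ?_) (hsdd i)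
  have hdiag : 0 < A k k := (sum_nonneg fun _ _ => abs_nonneg _).trans_lt (hsdd k)
  exact mul_le_of_le_one_right (abs_nonneg _) ((div_lt_one hdiag).2 (hsdd k)).le

end Matrix

/-- If `A` is a strictly diagonally dominant nonsingular `M`-matrix, then
`1/a_ii ≤ α_ii ≤ 1/(a_ii - ∑_{k≠i} |a_ik| d_k)` where `d_k = (∑_{j≠k} |a_kj|)/a_kk`. -/
theorem inv_diag_two_sided_bound {n : ℕ} (A : Matrix (Fin n) (Fin n) ℝ)
    (hA : IsUnit A.det)
    (hoff : ∀ i j, i ≠ j → A i j ≤ 0)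
    (hinv : ∀ i j, 0 ≤ A⁻¹ i j)
    (hsdd : ∀ i, ∑ j ∈ univ.erase i, |A i j| < A i i) :
    ∀ i, 1 / A i i ≤ A⁻¹ i i ∧
      A⁻¹ i i ≤ 1 / (A i i - ∑ k ∈ univ.erase i,
        |A i k| * ((∑ j ∈ univ.erase k, |A k j|) / A k k)) := by
  intro i
  have hcol : ∀ j, A.mulVec (fun k => A⁻¹ k i) j = if j = i then 1 else 0 := fun j => by
    rw [← Matrix.one_apply, ← Matrix.mul_nonsing_inv A hA]
    rfl
  have hx : 0 ≤ fun k => A⁻¹ k i := (hinv · i)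
  have hdiag : 0 < A i i := (sum_nonneg fun _ _ => abs_nonneg _).trans_lt (hsdd i)
  constructor
  · rw [div_le_iff₀ hdiag, mul_comm]
    exact Matrix.one_le_diag_mul_of_mulVec_apply_eq_one hoff hx (by simp [hcol])
  · rw [le_div_iff₀ (sub_pos.2 (Matrix.sum_abs_mul_div_lt_diag hsdd i)), mul_comm]
    exact Matrix.sub_sum_abs_mul_div_mul_le_one hoff hsdd hx hcol
end

section
/- If A is a strictly diagonally dominant M-matrix, then for all j ≠ i, the quantity m_{ji} = (|a_{ji}| + Σ_{k≠j,i} |a_{jk}| r_i) / |a_{jj}| satisfies m_{ji} ≤ r_i, where r_i = max_{j≠i} |a_{ji}| / (|a_{jj}| - Σ_{k≠j,i} |a_{jk}|). -/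
open Finset

theorem add_mul_div_le_of_div_sub_le {K : Type*} [Field K] [LinearOrder K] [IsStrictOrderedRing K]
    {a s d r : K} (hs : 0 ≤ s) (hsd : s < d) (h : a / (d - s) ≤ r) : (a + s * r) / d ≤ r := by
  have hds : 0 < d - s := sub_pos.mpr hsd
  rw [div_le_iff₀ hds] at h
  rw [div_le_iff₀ (hs.trans_lt hsd)]
  linarith

theorem sum_erase_erase_abs_lt_abs_diag {ι : Type*} [Fintype ι] [DecidableEq ι]
    (A : Matrix ι ι ℝ) {j : ι} (hj : ∑ k ∈ univ.erase j, |A j k| < A j j) (i : ι) :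
    ∑ k ∈ (univ.erase j).erase i, |A j k| < |A j j| :=
  calc ∑ k ∈ (univ.erase j).erase i, |A j k|
      ≤ ∑ k ∈ univ.erase j, |A j k| :=
        sum_le_sum_of_subset_of_nonneg (erase_subset _ _) fun _ _ _ => abs_nonneg _
    _ < A j j := hj
    _ ≤ |A j j| := le_abs_self _

theorem m_ji_le_r_i_general {n : ℕ} (A : Matrix (Fin n) (Fin n) ℝ)
    (hsdd : ∀ i, ∑ j ∈ univ.erase i, |A i j| < A i i)
    (hne : ∀ i : Fin n, (univ.erase i).Nonempty)
    (r : Fin n → ℝ)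
    (hr : ∀ i, r i = (univ.erase i).sup' (hne i)
        (fun j => |A j i| / (|A j j| - ∑ k ∈ (univ.erase j).erase i, |A j k|))) :
    ∀ i j : Fin n, j ≠ i →
      (|A j i| + (∑ k ∈ (univ.erase j).erase i, |A j k|) * r i) / |A j j| ≤ r i := by
  intro i j hji
  apply add_mul_div_le_of_div_sub_le (sum_nonneg fun _ _ => abs_nonneg _)
    (sum_erase_erase_abs_lt_abs_diag A (hsdd j) i)
  rw [hr i]
  exact le_sup' (fun j => |A j i| / (|A j j| - ∑ k ∈ (univ.erase j).erase i, |A j k|))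
    (mem_erase.mpr ⟨hji, mem_univ j⟩)

/-- If `A` is a strictly diagonally dominant nonsingular `M`-matrix, then for all `j ≠ i`,
`m_ji = (|a_ji| + ∑_{k≠j,i} |a_jk| r_i) / a_jj ≤ r_i`, where
`r_i = max_{j≠i} |a_ji| / (a_jj - ∑_{k≠j,i} |a_jk|)`. -/
theorem m_ji_le_r_i {n : ℕ} (hn : 2 ≤ n) (A : Matrix (Fin n) (Fin n) ℝ)
    (hA : IsUnit A.det)
    (hoff : ∀ i j, i ≠ j → A i j ≤ 0)
    (hinv : ∀ i j, 0 ≤ A⁻¹ i j)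
    (hsdd : ∀ i, ∑ j ∈ univ.erase i, |A i j| < A i i)
    (hne : ∀ i : Fin n, (univ.erase i).Nonempty)
    (r : Fin n → ℝ)
    (hr : ∀ i, r i = (univ.erase i).sup' (hne i)
        (fun j => |A j i| / (|A j j| - ∑ k ∈ (univ.erase j).erase i, |A j k|))) :
    ∀ i j : Fin n, j ≠ i →
      (|A j i| + (∑ k ∈ (univ.erase j).erase i, |A j k|) * r i) / |A j j| ≤ r i :=
  m_ji_le_r_i_general A hsdd hne r hr
end

section
/- For nonnegative reals a, b, s, t with the property that b + b·t ≤ a + a·s (assuming WLOG ordering), one has a + b + [ (a - b)² + 4 a b s t ]^{1/2} ≤ 2 max{ a(1+s), b(1+t) }; consequently, the Brauer-type bound (1/2) max_{i≠j}{ b_{ii}α_{ii} + b_{jj}α_{jj} + [ (b_{ii}α_{ii} - b_{jj}α_{jj})² + 4 α_{ii}α_{jj} S_i S_j ]^{1/2} } is at most max_i { b_{ii}α_{ii} + α_{ii} S_i }, where S_i = Σ_{k≠i} b_{ki} p_{ki}. -/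
open Finset

/-- Squaring works because `(A - B + 2X)² - ((A - B)² + 4XY) = 4X((A + X) - (B + Y))`. -/
lemma sqrt_sq_sub_add_le {A B X Y : ℝ} (hX : 0 ≤ X) (hY : 0 ≤ Y) (h : B + Y ≤ A + X) :
    √((A - B) ^ 2 + 4 * X * Y) ≤ A - B + 2 * X := by
  have hsq : (A - B) ^ 2 + 4 * X * Y ≤ (A - B + 2 * X) ^ 2 := by
    nlinarith [mul_nonneg hX (sub_nonneg.mpr h)]
  exact Real.sqrt_le_iff.mpr ⟨by linarith, hsq⟩

lemma add_add_sqrt_le_two_mul_max {A B X Y : ℝ} (hX : 0 ≤ X) (hY : 0 ≤ Y) :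
    A + B + √((A - B) ^ 2 + 4 * X * Y) ≤ 2 * max (A + X) (B + Y) := by
  rcases le_total (B + Y) (A + X) with h | h
  · have hsqrt := sqrt_sq_sub_add_le hX hY h
    linarith [le_max_left (A + X) (B + Y)]
  · have hsqrt := sqrt_sq_sub_add_le hY hX h
    rw [sub_sq_comm, mul_right_comm] at hsqrt
    linarith [le_max_right (A + X) (B + Y)]

theorem brauer_le_gershgorin_bound_general {n : ℕ}
    (a b s t : ℝ) (ha : 0 ≤ a) (hb : 0 ≤ b) (hs : 0 ≤ s) (ht : 0 ≤ t)
    (α bd S : Fin n → ℝ)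
    (hα : ∀ i, 0 ≤ α i) (hS : ∀ i, 0 ≤ S i)
    (hne : (univ : Finset (Fin n)).Nonempty) :
    a + b + Real.sqrt ((a - b) ^ 2 + 4 * a * b * s * t) ≤
        2 * max (a * (1 + s)) (b * (1 + t)) ∧
    ∀ i j : Fin n, i ≠ j →
      (1 / 2) * (bd i * α i + bd j * α j +
          Real.sqrt ((bd i * α i - bd j * α j) ^ 2 + 4 * α i * α j * S i * S j)) ≤
        univ.sup' hne (fun m => bd m * α m + α m * S m) := by
  refine ⟨?_, fun i j _ => ?_⟩
  · calc a + b + √((a - b) ^ 2 + 4 * a * b * s * t)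
          = a + b + √((a - b) ^ 2 + 4 * (a * s) * (b * t)) := by ring_nf
      _ ≤ 2 * max (a + a * s) (b + b * t) :=
          add_add_sqrt_le_two_mul_max (mul_nonneg ha hs) (mul_nonneg hb ht)
      _ = 2 * max (a * (1 + s)) (b * (1 + t)) := by rw [mul_one_add, mul_one_add]
  · set row := fun m => bd m * α m + α m * S m
    have hpair := add_add_sqrt_le_two_mul_max (A := bd i * α i) (B := bd j * α j)
      (mul_nonneg (hα i) (hS i)) (mul_nonneg (hα j) (hS j))
    have hmax : max (row i) (row j) ≤ univ.sup' hne row :=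
      max_le (le_sup' row (mem_univ i)) (le_sup' row (mem_univ j))
    calc (1 / 2) * (bd i * α i + bd j * α j +
            √((bd i * α i - bd j * α j) ^ 2 + 4 * α i * α j * S i * S j))
          = (1 / 2) * (bd i * α i + bd j * α j +
            √((bd i * α i - bd j * α j) ^ 2 + 4 * (α i * S i) * (α j * S j))) := by ring_nf
      _ ≤ max (row i) (row j) := by linarith
      _ ≤ univ.sup' hne row := hmax

/-- Elementary inequality: for nonnegative reals `a, b, s, t` with `b + b*t ≤ a + a*s`,
`a + b + √((a-b)² + 4abst) ≤ 2 max{a(1+s), b(1+t)}`; consequently the Brauer-type pairwise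
bound is at most the Gershgorin-type row-wise bound `max_i (b_ii α_ii + α_ii S_i)`. -/
theorem brauer_le_gershgorin_bound {n : ℕ}
    (a b s t : ℝ) (ha : 0 ≤ a) (hb : 0 ≤ b) (hs : 0 ≤ s) (ht : 0 ≤ t)
    (hord : b + b * t ≤ a + a * s)
    (α bd S : Fin n → ℝ)
    (hα : ∀ i, 0 ≤ α i) (hbd : ∀ i, 0 ≤ bd i) (hS : ∀ i, 0 ≤ S i)
    (hne : (univ : Finset (Fin n)).Nonempty) :
    a + b + Real.sqrt ((a - b) ^ 2 + 4 * a * b * s * t) ≤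
        2 * max (a * (1 + s)) (b * (1 + t)) ∧
    ∀ i j : Fin n, i ≠ j →
      (1 / 2) * (bd i * α i + bd j * α j +
          Real.sqrt ((bd i * α i - bd j * α j) ^ 2 + 4 * α i * α j * S i * S j)) ≤
        univ.sup' hne (fun m => bd m * α m + α m * S m) :=
  brauer_le_gershgorin_bound_general a b s t ha hb hs ht α bd S hα hS hne
end

section
/- Let A be a nonsingular M-matrix with inverse [α_{ij}], and suppose 0 ≤ p_{ki} < 1 satisfy α_{ki} ≤ p_{ki} α_{ii} for all k ≠ i. Then τ(A) ≥ 1 / max_i { (1 + Σ_{k≠i} p_{ki}) α_{ii} }. -/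
/-!
Every eigenvalue `μ` of `A⁻¹ = [αᵢⱼ] ≥ 0` satisfies, by Gershgorin's theorem for columns,
`|μ| ≤ αᵢᵢ + ∑_{k≠i} αₖᵢ ≤ (1 + ∑_{k≠i} pₖᵢ) αᵢᵢ` for some `i`, which bounds `ρ(A⁻¹)` from above;
and `ρ(A⁻¹) > 0` because `A⁻¹` is invertible, so taking reciprocals reverses the inequality.
-/

open Finset

/-- The spectral radius of a real matrix. -/
noncomputable def specRad {n : ℕ} (M : Matrix (Fin n) (Fin n) ℝ) : ℝ :=
  sSup ((fun z : ℂ => ‖z‖) '' spectrum ℂ (M.map Complex.ofReal))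

open Matrix

namespace Matrix

variable {K ι : Type*} [Fintype ι] [DecidableEq ι]

theorem exists_norm_le_sum_col_of_mem_spectrum [NormedField K] {B : Matrix ι ι K} {μ : K}
    (hμ : μ ∈ spectrum K B) : ∃ k, ‖μ‖ ≤ ∑ i, ‖B i k‖ := by
  by_contra! hlt
  refine spectrum.mem_iff.mp hμ ((isUnit_iff_isUnit_det _).mpr (isUnit_iff_ne_zero.mpr ?_))
  refine det_ne_zero_of_sum_col_lt_diag fun k => ?_
  have hoff : ∑ i ∈ univ.erase k, ‖(algebraMap K _ μ - B) i k‖ = ∑ i ∈ univ.erase k, ‖B i k‖ :=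
    sum_congr rfl fun i hi => by
      rw [sub_apply, algebraMap_matrix_apply, if_neg (mem_erase.mp hi).1, zero_sub, norm_neg]
  calc ∑ i ∈ univ.erase k, ‖(algebraMap K _ μ - B) i k‖
      = ∑ i, ‖B i k‖ - ‖B k k‖ := by rw [hoff, sum_erase_eq_sub (mem_univ k)]
    _ < ‖μ‖ - ‖B k k‖ := by linarith [hlt k]
    _ ≤ ‖μ - B k k‖ := norm_sub_norm_le _ _
    _ = ‖(algebraMap K _ μ - B) k k‖ := by simp [algebraMap_matrix_apply]

theorem spectrum_nonempty [Field K] [IsAlgClosed K] [Nonempty ι] (B : Matrix ι ι K) :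
    (spectrum K B).Nonempty := by
  obtain ⟨μ, hμ⟩ := Module.End.exists_eigenvalue (toLin' B)
  exact ⟨μ, by rwa [Module.End.hasEigenvalue_iff_mem_spectrum, spectrum_toLin'] at hμ⟩

end Matrix

section SpecRad

variable {n : ℕ} [Nonempty (Fin n)] {M : Matrix (Fin n) (Fin n) ℝ}

theorem specRad_le_of_sum_col_le {c : ℝ} (hc : ∀ k, ∑ i, |M i k| ≤ c) : specRad M ≤ c := by
  obtain ⟨k⟩ := ‹Nonempty (Fin n)›
  refine Real.sSup_le ?_ ((sum_nonneg fun i _ => abs_nonneg (M i k)).trans (hc k))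
  rintro _ ⟨μ, hμ, rfl⟩
  obtain ⟨j, hj⟩ := exists_norm_le_sum_col_of_mem_spectrum hμ
  calc ‖μ‖ ≤ ∑ i, ‖M.map Complex.ofReal i j‖ := hj
    _ = ∑ i, |M i j| := by simp only [map_apply, Complex.norm_real, Real.norm_eq_abs]
    _ ≤ c := hc j

theorem specRad_pos_of_isUnit_det (hM : IsUnit M.det) : 0 < specRad M := by
  obtain ⟨μ, hμ⟩ := spectrum_nonempty (M.map Complex.ofReal)
  have hunit : IsUnit (M.map Complex.ofReal) := by
    rw [isUnit_iff_isUnit_det]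
    change IsUnit (Complex.ofRealHom.mapMatrix M).det
    rw [← RingHom.map_det]
    exact hM.map _
  have hμ0 : μ ≠ 0 := by
    rintro rfl
    exact spectrum.zero_notMem ℂ hunit hμ
  have hbdd := ((finite_spectrum (M.map Complex.ofReal)).image fun z : ℂ => ‖z‖).bddAbove
  exact (norm_pos_iff.mpr hμ0).trans_le (le_csSup hbdd ⟨μ, hμ, rfl⟩)

end SpecRad

theorem sum_abs_col_le_of_le_mul_diag {ι : Type*} [Fintype ι] [DecidableEq ι]
    {α : Matrix ι ι ℝ} {p : ι → ι → ℝ} (hα : ∀ i j, 0 ≤ α i j)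
    (hp : ∀ k i, k ≠ i → α k i ≤ p k i * α i i) (i : ι) : ∑ k, |α k i| ≤ (1 + ∑ k ∈ univ.erase i, p k i) * α i i := by
  simp only [abs_of_nonneg (hα _ i)]
  rw [← add_sum_erase _ _ (mem_univ i), add_mul, one_mul, sum_mul]
  gcongr with k hk
  exact hp k i (mem_erase.mp hk).1

theorem tau_lower_bound_gershgorin_general {n : ℕ}
    (A : Matrix (Fin n) (Fin n) ℝ)
    (hA : IsUnit A.det)
    (hinv : ∀ i j, 0 ≤ A⁻¹ i j)
    (p : Fin n → Fin n → ℝ)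
    (hpa : ∀ k i, k ≠ i → A⁻¹ k i ≤ p k i * A⁻¹ i i)
    (hne : (univ : Finset (Fin n)).Nonempty) :
    1 / (univ.sup' hne (fun i => (1 + ∑ k ∈ univ.erase i, p k i) * A⁻¹ i i)) ≤
      1 / specRad A⁻¹ := by
  have : Nonempty (Fin n) := univ_nonempty_iff.mp hne
  refine one_div_le_one_div_of_le (specRad_pos_of_isUnit_det (A.isUnit_nonsing_inv_det hA))
    (specRad_le_of_sum_col_le fun k => (sum_abs_col_le_of_le_mul_diag hinv hpa k).trans ?_)
  exact le_sup' (fun i => (1 + ∑ k ∈ univ.erase i, p k i) * A⁻¹ i i) (mem_univ k)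

/-- Lower bound for the minimum eigenvalue `τ(A) = 1/ρ(A⁻¹)` of an `M`-matrix `A`:
`τ(A) ≥ 1 / max_i { (1 + ∑_{k≠i} p_ki) α_ii }`. -/
theorem tau_lower_bound_gershgorin {n : ℕ} (hn : 1 ≤ n)
    (A : Matrix (Fin n) (Fin n) ℝ)
    (hA : IsUnit A.det)
    (hoff : ∀ i j, i ≠ j → A i j ≤ 0)
    (hinv : ∀ i j, 0 ≤ A⁻¹ i j)
    (p : Fin n → Fin n → ℝ)
    (hp0 : ∀ k i, k ≠ i → 0 ≤ p k i) (hp1 : ∀ k i, k ≠ i → p k i < 1)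
    (hpa : ∀ k i, k ≠ i → A⁻¹ k i ≤ p k i * A⁻¹ i i)
    (hne : (univ : Finset (Fin n)).Nonempty) :
    1 / (univ.sup' hne (fun i => (1 + ∑ k ∈ univ.erase i, p k i) * A⁻¹ i i)) ≤
      1 / specRad A⁻¹ :=
  tau_lower_bound_gershgorin_general A hA hinv p hpa hne
end

section
/- If A is an M-matrix whose inverse is doubly stochastic, then a_{ii} = Σ_{j≠i} |a_{ij}| + 1 = Σ_{j≠i} |a_{ji}| + 1 for every i; i.e., each diagonal entry exceeds the corresponding off-diagonal row sum and column sum by exactly 1. -/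
/-!
Multiplying `A⁻¹ *ᵥ 1 = 1` by `A` gives `A *ᵥ 1 = 1`: the rows of `A` sum to `1`, and likewise
its columns. Since the off-diagonal entries are nonpositive, each off-diagonal part of a row or
column sum is minus the sum of the absolute values, which leaves `a_ii = ∑_{j≠i} |a_ij| + 1`.
-/

open Finset Matrix

namespace Matrix

variable {m n R : Type*} [Semiring R]

theorem mulVec_one_apply [Fintype n] (A : Matrix m n R) (i : m) : (A *ᵥ 1) i = ∑ j, A i j := by
  simp [mulVec, dotProduct]

theorem one_vecMul_apply [Fintype m] (A : Matrix m n R) (j : n) : (1 ᵥ* A) j = ∑ i, A i j := by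
  simp [vecMul, dotProduct]

variable [Fintype m] [Fintype n]

theorem mulVec_one_eq_one_of_mul_eq_one [DecidableEq m] {A : Matrix m n R} {B : Matrix n m R}
    (hAB : A * B = 1) (hB : B *ᵥ 1 = 1) : A *ᵥ 1 = 1 := by
  rw [← hB, mulVec_mulVec, hAB, one_mulVec]

theorem one_vecMul_eq_one_of_mul_eq_one [DecidableEq n] {A : Matrix m n R} {B : Matrix n m R}
    (hBA : B * A = 1) (hB : 1 ᵥ* B = 1) : 1 ᵥ* A = 1 := by
  rw [← hB, vecMul_vecMul, hBA, vecMul_one]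

end Matrix

theorem eq_sum_erase_abs_add_of_sum_eq {ι G : Type*} [Fintype ι] [DecidableEq ι]
    [AddCommGroup G] [LinearOrder G] [IsOrderedAddMonoid G] {f : ι → G} {s : G} {i : ι}
    (hsum : ∑ j, f j = s) (hf : ∀ j, j ≠ i → f j ≤ 0) :
    f i = ∑ j ∈ univ.erase i, |f j| + s := by
  have habs : ∑ j ∈ univ.erase i, |f j| = -∑ j ∈ univ.erase i, f j := by
    rw [← sum_neg_distrib]
    exact sum_congr rfl fun j hj => abs_of_nonpos (hf j (ne_of_mem_erase hj))
  rw [habs, ← hsum, ← add_sum_erase univ f (mem_univ i)]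
  abel

theorem diag_eq_offdiag_sum_add_one_general {n : ℕ}
    (A : Matrix (Fin n) (Fin n) ℝ)
    (hA : IsUnit A.det)
    (hoff : ∀ i j, i ≠ j → A i j ≤ 0)
    (hrow : ∀ i, ∑ j, A⁻¹ i j = 1)
    (hcol : ∀ j, ∑ i, A⁻¹ i j = 1) :
    ∀ i, A i i = (∑ j ∈ univ.erase i, |A i j|) + 1 ∧
      A i i = (∑ j ∈ univ.erase i, |A j i|) + 1 := by
  have hrowA : A *ᵥ 1 = 1 :=
    mulVec_one_eq_one_of_mul_eq_one (mul_nonsing_inv A hA)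
      (funext fun i => (mulVec_one_apply _ i).trans (hrow i))
  have hcolA : 1 ᵥ* A = 1 :=
    one_vecMul_eq_one_of_mul_eq_one (nonsing_inv_mul A hA)
      (funext fun j => (one_vecMul_apply _ j).trans (hcol j))
  intro i
  exact ⟨eq_sum_erase_abs_add_of_sum_eq ((mulVec_one_apply A i).symm.trans (congrFun hrowA i))
      fun j hj => hoff i j hj.symm,
    eq_sum_erase_abs_add_of_sum_eq ((one_vecMul_apply A i).symm.trans (congrFun hcolA i))
      fun j hj => hoff j i hj⟩

/-- If `A` is an `M`-matrix whose inverse is doubly stochastic, then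
`a_ii = ∑_{j≠i} |a_ij| + 1 = ∑_{j≠i} |a_ji| + 1` for every `i`. -/
theorem diag_eq_offdiag_sum_add_one {n : ℕ}
    (A : Matrix (Fin n) (Fin n) ℝ)
    (hA : IsUnit A.det)
    (hoff : ∀ i j, i ≠ j → A i j ≤ 0)
    (hinv : ∀ i j, 0 ≤ A⁻¹ i j)
    (hrow : ∀ i, ∑ j, A⁻¹ i j = 1)
    (hcol : ∀ j, ∑ i, A⁻¹ i j = 1) :
    ∀ i, A i i = (∑ j ∈ univ.erase i, |A i j|) + 1 ∧
      A i i = (∑ j ∈ univ.erase i, |A j i|) + 1 :=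
  diag_eq_offdiag_sum_add_one_general A hA hoff hrow hcol
end

section
/- Let A be an M-matrix with all diagonal entries equal and with A^{-1} doubly stochastic. Then the spectral radius of the Jacobi iteration matrix J_A = D^{-1}(D - A) (D the diagonal of A) equals d = 1 - 1/a_{11}, and moreover ρ(J_A) = d ≥ r_i for every i, where r_i = max_{j≠i} |a_{ji}| / (|a_{jj}| - Σ_{k≠j,i} |a_{jk}|). -/
/-!
Since `A⁻¹ 𝟙 = 𝟙` forces `A 𝟙 = 𝟙`, every row of `A` sums to `1`; with a common diagonal `a`,
the Jacobi matrix `J_A = I - A / a` is then entrywise nonnegative with all row sums `1 - 1/a`.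
For a nonnegative matrix with constant row sum `s`, `𝟙` is an eigenvector for `s` while the
`ℓ^∞` operator norm bounds every eigenvalue by `s`, so `ρ(J_A) = 1 - 1/a`. In row `j` the
off-diagonal absolute values sum to `a - 1`, so the denominator of `r_i` is `1 + |a_{ji}|`, and
`t ↦ t / (1 + t) = 1 - 1/(1 + t)` is increasing with `|a_{ji}| ≤ a - 1`.
-/

open Finset Matrix

section Spectrum

variable {ι : Type*} [Fintype ι] [DecidableEq ι]

theorem mem_spectrum_of_mulVec_eq_smul {K : Type*} [Field K] {B : Matrix ι ι K} {v : ι → K}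
    {μ : K} (hv : v ≠ 0) (h : B *ᵥ v = μ • v) : μ ∈ spectrum K B := by
  rw [← spectrum_toLin', ← Module.End.hasEigenvalue_iff_mem_spectrum]
  exact Module.End.hasEigenvalue_of_hasEigenvector ⟨Module.End.mem_eigenspace_iff.mpr h, hv⟩

attribute [local instance] Matrix.linftyOpNormedRing Matrix.linftyOpNormedAlgebra in
theorem norm_le_of_mem_spectrum_of_sum_norm_row_le [Nonempty ι] {B : Matrix ι ι ℂ} {μ : ℂ}
    (hμ : μ ∈ spectrum ℂ B) {s : ℝ} (hs : ∀ i, ∑ j, ‖B i j‖ ≤ s) : ‖μ‖ ≤ s := by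
  refine (spectrum.norm_le_norm_of_mem hμ).trans ?_
  have hs0 : 0 ≤ s := (sum_nonneg fun j _ => norm_nonneg _).trans (hs (Classical.arbitrary ι))
  lift s to NNReal using hs0
  rw [linfty_opNorm_def, NNReal.coe_le_coe]
  exact Finset.sup_le fun i _ => by rw [← NNReal.coe_le_coe]; push_cast; exact hs i

end Spectrum

theorem specRad_eq_of_nonneg_of_sum_row_eq {n : ℕ} [NeZero n] {M : Matrix (Fin n) (Fin n) ℝ}
    (hM : ∀ i j, 0 ≤ M i j) {s : ℝ} (hs : ∀ i, ∑ j, M i j = s) : specRad M = s := by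
  have hs0 : 0 ≤ s := hs 0 ▸ sum_nonneg fun j _ => hM 0 j
  have hnorm : ∀ i, ∑ j, ‖M.map Complex.ofReal i j‖ = s := fun i => by
    simp only [map_apply, Complex.norm_real, Real.norm_of_nonneg (hM i _), hs i]
  refine IsGreatest.csSup_eq ⟨⟨s, ?_, by simp [abs_of_nonneg hs0]⟩, ?_⟩
  · refine mem_spectrum_of_mulVec_eq_smul (v := 1) one_ne_zero (funext fun i => ?_)
    simp [mulVec, dotProduct, ← Complex.ofReal_sum, hs i]
  · rintro _ ⟨μ, hμ, rfl⟩
    exact norm_le_of_mem_spectrum_of_sum_norm_row_le hμ fun i => (hnorm i).le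

section Rows

variable {ι : Type*} [Fintype ι] [DecidableEq ι]

theorem sum_row_eq_one_of_sum_row_inv_eq_one {R : Type*} [CommRing R] {A : Matrix ι ι R}
    (hA : IsUnit A.det) (h : ∀ i, ∑ j, A⁻¹ i j = 1) (i : ι) : ∑ j, A i j = 1 := by
  have hinv : A⁻¹ *ᵥ 1 = 1 := funext fun i => by simp [mulVec, dotProduct, h i]
  have hA1 : A *ᵥ 1 = 1 := by
    conv_lhs => rw [← hinv]
    rw [mulVec_mulVec, mul_nonsing_inv _ hA, one_mulVec]
  simpa [mulVec, dotProduct] using congrFun hA1 i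

variable {A : Matrix ι ι ℝ} {i : ι}

theorem sum_erase_abs_row_eq (hoff : ∀ j, i ≠ j → A i j ≤ 0) :
    ∑ j ∈ univ.erase i, |A i j| = A i i - ∑ j, A i j := by
  rw [← add_sum_erase _ _ (mem_univ i), sub_add_cancel_left, ← sum_neg_distrib]
  exact sum_congr rfl fun j hj => abs_of_nonpos (hoff j (ne_of_mem_erase hj).symm)

theorem one_le_diag_of_sum_row_eq_one (hoff : ∀ j, i ≠ j → A i j ≤ 0) (hsum : ∑ j, A i j = 1) :
    1 ≤ A i i := by
  have := sum_erase_abs_row_eq hoff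
  have : 0 ≤ ∑ j ∈ univ.erase i, |A i j| := sum_nonneg fun j _ => abs_nonneg _
  linarith

theorem abs_div_le_one_sub_one_div_diag (hoff : ∀ k, i ≠ k → A i k ≤ 0)
    (hsum : ∑ k, A i k = 1) {j : ι} (hji : j ≠ i) :
    |A i j| / (|A i i| - ∑ k ∈ (univ.erase i).erase j, |A i k|) ≤ 1 - 1 / A i i := by
  have hS : ∑ k ∈ univ.erase i, |A i k| = A i i - 1 := by rw [sum_erase_abs_row_eq hoff, hsum]
  have hj : j ∈ univ.erase i := mem_erase.mpr ⟨hji, mem_univ j⟩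
  have hsplit : |A i j| + ∑ k ∈ (univ.erase i).erase j, |A i k| = A i i - 1 :=
    (add_sum_erase _ (fun k => |A i k|) hj).trans hS
  have hjS : |A i j| ≤ A i i - 1 := hS ▸ single_le_sum (fun k _ => abs_nonneg (A i k)) hj
  rw [abs_of_nonneg (a := A i i) (by linarith [one_le_diag_of_sum_row_eq_one hoff hsum]),
    show A i i - ∑ k ∈ (univ.erase i).erase j, |A i k| = 1 + |A i j| by linarith]
  calc |A i j| / (1 + |A i j|) = 1 - 1 / (1 + |A i j|) := by field_simp; ring
    _ ≤ 1 - 1 / (1 + (A i i - 1)) := by gcongr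
    _ = 1 - 1 / A i i := by rw [add_sub_cancel]

end Rows

section Jacobi

variable {ι : Type*} [Fintype ι] [DecidableEq ι]

noncomputable def jacobiMatrix (A : Matrix ι ι ℝ) : Matrix ι ι ℝ :=
  diagonal (fun i => (A i i)⁻¹) * (diagonal (fun i => A i i) - A)

theorem jacobiMatrix_apply (A : Matrix ι ι ℝ) (i j : ι) :
    jacobiMatrix A i j = (A i i)⁻¹ * ((if i = j then A i i else 0) - A i j) := by
  rw [jacobiMatrix, diagonal_mul, Matrix.sub_apply, diagonal_apply]

theorem jacobiMatrix_nonneg {A : Matrix ι ι ℝ} (hdiag : ∀ i, 0 ≤ A i i)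
    (hoff : ∀ i j, i ≠ j → A i j ≤ 0) (i j : ι) : 0 ≤ jacobiMatrix A i j := by
  rw [jacobiMatrix_apply]
  split_ifs with h
  · simp [h]
  · exact mul_nonneg (inv_nonneg.mpr (hdiag i)) (by linarith [hoff i j h])

theorem sum_jacobiMatrix_row {A : Matrix ι ι ℝ} {i : ι} (hi : A i i ≠ 0) :
    ∑ j, jacobiMatrix A i j = 1 - (∑ j, A i j) / A i i := by
  simp only [jacobiMatrix_apply, ← mul_sum, sum_sub_distrib, sum_ite_eq, mem_univ, if_true]
  field_simp

end Jacobi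

theorem jacobi_specRad_eq_and_ge_r_general {n : ℕ}
    (A : Matrix (Fin n) (Fin n) ℝ)
    (hA : IsUnit A.det)
    (hoff : ∀ i j, i ≠ j → A i j ≤ 0)
    (hrow : ∀ i, ∑ j, A⁻¹ i j = 1)
    (hdiag : ∀ i j, A i i = A j j)
    (hne : ∀ i : Fin n, (univ.erase i).Nonempty) :
    ∀ i₀ : Fin n,
      specRad ((diagonal fun i => (A i i)⁻¹) * (diagonal (fun i => A i i) - A)) =
        1 - 1 / A i₀ i₀ ∧
      ∀ i : Fin n,
        (univ.erase i).sup' (hne i)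
            (fun j => |A j i| / (|A j j| - ∑ k ∈ (univ.erase j).erase i, |A j k|)) ≤
          1 - 1 / A i₀ i₀ := by
  intro i₀
  have : NeZero n := NeZero.of_pos i₀.pos
  have hsum := sum_row_eq_one_of_sum_row_inv_eq_one hA hrow
  have hone : ∀ i, 1 ≤ A i i := fun i => one_le_diag_of_sum_row_eq_one (hoff i) (hsum i)
  refine ⟨?_, fun i => sup'_le _ _ fun j hj => ?_⟩
  · refine specRad_eq_of_nonneg_of_sum_row_eq (M := jacobiMatrix A)
      (jacobiMatrix_nonneg (fun i => by linarith [hone i]) hoff) fun i => ?_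
    rw [sum_jacobiMatrix_row (by linarith [hone i]), hsum, hdiag i i₀]
  · rw [← hdiag j i₀]
    exact abs_div_le_one_sub_one_div_diag (hoff j) (hsum j) (ne_of_mem_erase hj).symm

/-- For an `M`-matrix `A` with equal diagonal entries and doubly stochastic inverse, the
spectral radius of the Jacobi iteration matrix `J_A = D⁻¹(D - A)` equals `d = 1 - 1/a_11`,
and `ρ(J_A) = d ≥ r_i` for every `i`. -/
theorem jacobi_specRad_eq_and_ge_r {n : ℕ} (hn : 2 ≤ n)
    (A : Matrix (Fin n) (Fin n) ℝ)
    (hA : IsUnit A.det)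
    (hoff : ∀ i j, i ≠ j → A i j ≤ 0)
    (hinv : ∀ i j, 0 ≤ A⁻¹ i j)
    (hrow : ∀ i, ∑ j, A⁻¹ i j = 1)
    (hcol : ∀ j, ∑ i, A⁻¹ i j = 1)
    (hdiag : ∀ i j, A i i = A j j)
    (hne : ∀ i : Fin n, (univ.erase i).Nonempty) :
    ∀ i₀ : Fin n,
      specRad ((diagonal fun i => (A i i)⁻¹) * (diagonal (fun i => A i i) - A)) =
        1 - 1 / A i₀ i₀ ∧
      ∀ i : Fin n,
        (univ.erase i).sup' (hne i)
            (fun j => |A j i| / (|A j j| - ∑ k ∈ (univ.erase j).erase i, |A j k|)) ≤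
          1 - 1 / A i₀ i₀ :=
  jacobi_specRad_eq_and_ge_r_general A hA hoff hrow hdiag hne
end

section
/- If A is an M-matrix whose inverse is doubly stochastic, then for each i, r_i = max_{j≠i} |a_{ji}|/(1 + |a_{ji}|) = (max_{j≠i} |a_{ji}|)/(1 + max_{j≠i} |a_{ji}|) ≤ 1 - 1/a_{ii}. -/
open Finset

/-!
Since `A⁻¹` has unit row and column sums, so does `A = (A⁻¹)⁻¹`. With nonpositive off-diagonal
entries this gives `a_jj = 1 + ∑_{k≠j} |a_jk|` and `a_ii = 1 + ∑_{j≠i} |a_ji|`. The row identity turns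
the denominator in `r_i` into `1 + |a_ji|`; since `t ↦ t / (1 + t)` is increasing for `t > -1`, it
commutes with the maximum, and the column identity bounds that maximum by `a_ii - 1`.
-/

namespace Matrix
variable {m R : Type*} [Fintype m] [Semiring R] {A B : Matrix m m R}

theorem mulVec_one_eq_one_iff : A *ᵥ 1 = 1 ↔ ∀ i, ∑ j, A i j = 1 := by
  simp [funext_iff, mulVec, dotProduct]

theorem one_vecMul_eq_one_iff : 1 ᵥ* A = 1 ↔ ∀ j, ∑ i, A i j = 1 := by
  simp [funext_iff, vecMul, dotProduct]

variable [DecidableEq m]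

theorem sum_row_eq_one_of_mul_eq_one (hAB : A * B = 1) (hB : ∀ i, ∑ j, B i j = 1) :
    ∀ i, ∑ j, A i j = 1 := by
  rw [← mulVec_one_eq_one_iff] at hB ⊢
  conv_lhs => rw [← hB]
  rw [mulVec_mulVec, hAB, one_mulVec]

theorem sum_col_eq_one_of_mul_eq_one (hBA : B * A = 1) (hB : ∀ j, ∑ i, B i j = 1) :
    ∀ j, ∑ i, A i j = 1 := by
  rw [← one_vecMul_eq_one_iff] at hB ⊢
  conv_lhs => rw [← hB]
  rw [vecMul_vecMul, hBA, vecMul_one]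

end Matrix

theorem Finset.eq_add_sum_abs_erase_of_sum_eq {ι α : Type*} [DecidableEq ι] [AddCommGroup α]
    [LinearOrder α] [IsOrderedAddMonoid α] {s : Finset ι} {f : ι → α} {i : ι} {c : α}
    (hi : i ∈ s) (hf : ∀ k ∈ s, k ≠ i → f k ≤ 0) (hsum : ∑ k ∈ s, f k = c) :
    f i = c + ∑ k ∈ s.erase i, |f k| := by
  have hneg : ∑ k ∈ s.erase i, |f k| = -∑ k ∈ s.erase i, f k := by
    rw [← sum_neg_distrib]
    exact sum_congr rfl fun k hk => abs_of_nonpos (hf k (mem_of_mem_erase hk) (ne_of_mem_erase hk))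
  rw [hneg, ← hsum, ← add_sum_erase s f hi]
  abel

theorem Finset.abs_sub_sum_erase_erase_eq {ι α : Type*} [DecidableEq ι] [AddCommGroup α]
    [LinearOrder α] [IsOrderedAddMonoid α] {s : Finset ι} {f : ι → α} {i j : ι} {c : α} (hc : 0 ≤ c) (hi : i ∈ s.erase j)
    (hj : f j = c + ∑ k ∈ s.erase j, |f k|) :
    |f j| - ∑ k ∈ (s.erase j).erase i, |f k| = c + |f i| := by
  have hpos : 0 ≤ f j := hj ▸ add_nonneg hc (sum_nonneg fun k _ => abs_nonneg (f k))
  rw [abs_of_nonneg hpos, hj, ← add_sum_erase _ _ hi]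
  abel

theorem MonotoneOn.apply_finset_sup' {ι α β : Type*} [LinearOrder α] [SemilatticeSup β]
    {t : Set α} {g : α → β} (hg : MonotoneOn g t) {s : Finset ι} (hs : s.Nonempty) {f : ι → α}
    (hf : ∀ i ∈ s, f i ∈ t) : g (s.sup' hs f) = s.sup' hs (g ∘ f) := by
  obtain ⟨i, hi, hmax⟩ := exists_mem_eq_sup' hs f
  refine le_antisymm ?_ (sup'_le hs _ fun k hk => ?_)
  · rw [hmax]
    exact le_sup' (g ∘ f) hi
  · rw [hmax]
    exact hg (hf k hk) (hf i hi) (hmax ▸ le_sup' f hk)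

theorem monotoneOn_div_one_add {K : Type*} [Field K] [LinearOrder K] [IsStrictOrderedRing K] :
    MonotoneOn (fun t : K => t / (1 + t)) (Set.Ioi (-1)) := by
  intro a ha b hb hab
  simp only [Set.mem_Ioi] at ha hb
  rw [div_le_div_iff₀ (by linarith) (by linarith)]
  linarith

theorem r_i_eq_and_le_general {n : ℕ}
    (A : Matrix (Fin n) (Fin n) ℝ)
    (hA : IsUnit A.det)
    (hoff : ∀ i j, i ≠ j → A i j ≤ 0)
    (hrow : ∀ i, ∑ j, A⁻¹ i j = 1)
    (hcol : ∀ j, ∑ i, A⁻¹ i j = 1)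
    (hne : ∀ i : Fin n, (univ.erase i).Nonempty) :
    ∀ i : Fin n,
      (univ.erase i).sup' (hne i)
          (fun j => |A j i| / (|A j j| - ∑ k ∈ (univ.erase j).erase i, |A j k|)) =
        (univ.erase i).sup' (hne i) (fun j => |A j i| / (1 + |A j i|)) ∧
      (univ.erase i).sup' (hne i)
          (fun j => |A j i| / (|A j j| - ∑ k ∈ (univ.erase j).erase i, |A j k|)) =
        ((univ.erase i).sup' (hne i) fun j => |A j i|) /
          (1 + (univ.erase i).sup' (hne i) fun j => |A j i|) ∧
      (univ.erase i).sup' (hne i)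
          (fun j => |A j i| / (|A j j| - ∑ k ∈ (univ.erase j).erase i, |A j k|)) ≤
        1 - 1 / A i i := by
  intro i
  have hrowA := Matrix.sum_row_eq_one_of_mul_eq_one (A.mul_nonsing_inv hA) hrow
  have hcolA := Matrix.sum_col_eq_one_of_mul_eq_one (A.nonsing_inv_mul hA) hcol
  have hdiag (j : Fin n) : A j j = 1 + ∑ k ∈ univ.erase j, |A j k| :=
    eq_add_sum_abs_erase_of_sum_eq (mem_univ j) (fun k _ hk => hoff j k hk.symm) (hrowA j)
  have hcoli : A i i = 1 + ∑ j ∈ univ.erase i, |A j i| :=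
    eq_add_sum_abs_erase_of_sum_eq (mem_univ i) (fun j _ hj => hoff j i hj) (hcolA i)
  have hr : (univ.erase i).sup' (hne i)
      (fun j => |A j i| / (|A j j| - ∑ k ∈ (univ.erase j).erase i, |A j k|)) =
      (univ.erase i).sup' (hne i) (fun j => |A j i| / (1 + |A j i|)) :=
    sup'_congr (hne i) rfl fun j hj => by
      rw [abs_sub_sum_erase_erase_eq zero_le_one (mem_erase.2 ⟨ne_of_mem_erase hj |>.symm,
        mem_univ i⟩) (hdiag j)]
  set M := (univ.erase i).sup' (hne i) fun j => |A j i|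
  have hmax := monotoneOn_div_one_add.apply_finset_sup' (hne i) fun j _ =>
    neg_one_lt_zero.trans_le (abs_nonneg (A j i))
  have hM : M ≤ A i i - 1 := by
    rw [hcoli, add_sub_cancel_left]
    exact sup'_le _ _ fun j hj => single_le_sum (fun k _ => abs_nonneg (A k i)) hj
  have hM0 : 0 ≤ M := le_sup'_of_le _ (hne i).choose_spec (abs_nonneg _)
  have hApos : 0 < A i i := by linarith
  refine ⟨hr, hr.trans hmax.symm, ?_⟩
  calc _ = M / (1 + M) := hr.trans hmax.symm
    _ ≤ (A i i - 1) / (1 + (A i i - 1)) :=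
      monotoneOn_div_one_add (neg_one_lt_zero.trans_le hM0) (by simpa using hApos) hM
    _ = 1 - 1 / A i i := by rw [add_sub_cancel, sub_div, div_self hApos.ne']

/-- If `A` is an `M`-matrix whose inverse is doubly stochastic, then for each `i`,
`r_i = max_{j≠i} |a_ji|/(1+|a_ji|) = (max_{j≠i}|a_ji|)/(1 + max_{j≠i}|a_ji|) ≤ 1 - 1/a_ii`. -/
theorem r_i_eq_and_le {n : ℕ} (hn : 2 ≤ n)
    (A : Matrix (Fin n) (Fin n) ℝ)
    (hA : IsUnit A.det)
    (hoff : ∀ i j, i ≠ j → A i j ≤ 0)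
    (hinv : ∀ i j, 0 ≤ A⁻¹ i j)
    (hrow : ∀ i, ∑ j, A⁻¹ i j = 1)
    (hcol : ∀ j, ∑ i, A⁻¹ i j = 1)
    (hne : ∀ i : Fin n, (univ.erase i).Nonempty) :
    ∀ i : Fin n,
      (univ.erase i).sup' (hne i)
          (fun j => |A j i| / (|A j j| - ∑ k ∈ (univ.erase j).erase i, |A j k|)) =
        (univ.erase i).sup' (hne i) (fun j => |A j i| / (1 + |A j i|)) ∧
      (univ.erase i).sup' (hne i)
          (fun j => |A j i| / (|A j j| - ∑ k ∈ (univ.erase j).erase i, |A j k|)) =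
        ((univ.erase i).sup' (hne i) fun j => |A j i|) /
          (1 + (univ.erase i).sup' (hne i) fun j => |A j i|) ∧
      (univ.erase i).sup' (hne i)
          (fun j => |A j i| / (|A j j| - ∑ k ∈ (univ.erase j).erase i, |A j k|)) ≤
        1 - 1 / A i i :=
  r_i_eq_and_le_general A hA hoff hrow hcol hne
end

section
/- Let A be a strictly diagonally dominant M-matrix with inverse [α_{ij}], and suppose 0 ≤ p_{ki} < 1 satisfy α_{ki} ≤ p_{ki} α_{ii} and α_{ii} ≤ φ_i := 1/(a_{ii} - Σ_{j≠i} |a_{ij}| p_{ji}). Then τ(A) ≥ 1 / max_i { (1 + Σ_{k≠i} p_{ki}) φ_i }. -/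
/-!
The hypotheses bound each column sum of the nonnegative matrix `A⁻¹`:
`∑ₖ αₖᵢ ≤ (1 + ∑_{k≠i} pₖᵢ) αᵢᵢ ≤ (1 + ∑_{k≠i} pₖᵢ) φᵢ`. The spectral radius is at most the
largest column sum (the `ℓ∞` operator norm of the transpose), and it is positive because `A⁻¹` is
invertible, so `τ(A) = 1/ρ(A⁻¹)` is at least the reciprocal of the largest bound.
-/

open Finset Matrix

theorem Matrix.spectrum_transpose {𝕜 ι : Type*} [Field 𝕜] [Fintype ι] [DecidableEq ι]
    (M : Matrix ι ι 𝕜) : spectrum 𝕜 Mᵀ = spectrum 𝕜 M := by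
  ext z
  rw [spectrum.mem_iff, spectrum.mem_iff, ← isUnit_transpose, transpose_sub, transpose_transpose,
    algebraMap_eq_diagonal, diagonal_transpose]

theorem Matrix.norm_le_of_mem_spectrum_of_sum_col_le {𝕜 ι : Type*} [NontriviallyNormedField 𝕜]
    [CompleteSpace 𝕜] [Fintype ι] [DecidableEq ι] [Nonempty ι] {M : Matrix ι ι 𝕜} {z : 𝕜}
    (hz : z ∈ spectrum 𝕜 M) {C : ℝ} (hC : ∀ j, ∑ i, ‖M i j‖ ≤ C) : ‖z‖ ≤ C := by
  let _ : NormedRing (Matrix ι ι 𝕜) := Matrix.linftyOpNormedRing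
  let _ : NormedAlgebra 𝕜 (Matrix ι ι 𝕜) := Matrix.linftyOpNormedAlgebra
  have hcomplete : CompleteSpace (Matrix ι ι 𝕜) := FiniteDimensional.complete 𝕜 _
  rw [← spectrum_transpose] at hz
  -- instance search does not see `hcomplete` through the `ℓ∞` norm structure
  refine (@spectrum.norm_le_norm_of_mem 𝕜 _ _ _ _ hcomplete _ _ _ hz).trans ?_
  have hC0 : 0 ≤ C := (sum_nonneg fun i _ => norm_nonneg _).trans (hC (Classical.arbitrary ι))
  rw [linfty_opNorm_def, ← Real.coe_toNNReal C hC0, NNReal.coe_le_coe]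
  refine Finset.sup_le fun j _ => ?_
  rw [← NNReal.coe_le_coe, Real.coe_toNNReal C hC0]
  simpa using hC j

section SpecRad

variable {n : ℕ} [Nonempty (Fin n)] {M : Matrix (Fin n) (Fin n) ℝ}

theorem norm_le_of_mem_spectrum_of_sum_abs_col_le {z : ℂ}
    (hz : z ∈ spectrum ℂ (M.map Complex.ofReal)) {C : ℝ} (hC : ∀ j, ∑ i, |M i j| ≤ C) :
    ‖z‖ ≤ C :=
  norm_le_of_mem_spectrum_of_sum_col_le hz (by simpa using hC)

theorem specRad_le_of_sum_abs_col_le {C : ℝ} (hC : ∀ j, ∑ i, |M i j| ≤ C) : specRad M ≤ C := by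
  have hC0 : 0 ≤ C := (sum_nonneg fun i _ => abs_nonneg _).trans (hC (Classical.arbitrary _))
  refine Real.sSup_le ?_ hC0
  rintro _ ⟨z, hz, rfl⟩
  exact norm_le_of_mem_spectrum_of_sum_abs_col_le hz hC

theorem norm_le_specRad {z : ℂ} (hz : z ∈ spectrum ℂ (M.map Complex.ofReal)) :
    ‖z‖ ≤ specRad M := by
  refine le_csSup ⟨∑ j, ∑ i, |M i j|, ?_⟩ ⟨z, hz, rfl⟩
  rintro _ ⟨w, hw, rfl⟩
  exact norm_le_of_mem_spectrum_of_sum_abs_col_le hw fun j =>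
    single_le_sum (f := fun j => ∑ i, |M i j|) (fun _ _ => sum_nonneg fun _ _ => abs_nonneg _)
      (mem_univ j)

theorem specRad_pos (hM : IsUnit M) : 0 < specRad M := by
  obtain ⟨z, hz⟩ := spectrum.nonempty_of_isAlgClosed_of_finiteDimensional ℂ (M.map Complex.ofReal)
  have hz0 : z ≠ 0 := by
    rintro rfl
    exact spectrum.zero_mem_iff ℂ |>.mp hz (hM.map Complex.ofRealHom.mapMatrix)
  exact (norm_pos_iff.mpr hz0).trans_le (norm_le_specRad hz)

end SpecRad

theorem sum_le_one_add_sum_erase_mul {ι : Type*} [Fintype ι] [DecidableEq ι] {x p : ι → ℝ} {i : ι}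
    {φ : ℝ} (hp : ∀ k, k ≠ i → 0 ≤ p k) (hx : ∀ k, k ≠ i → x k ≤ p k * x i) (hxi : x i ≤ φ) :
    ∑ k, x k ≤ (1 + ∑ k ∈ univ.erase i, p k) * φ := by
  have hp_sum : 0 ≤ 1 + ∑ k ∈ univ.erase i, p k :=
    add_nonneg zero_le_one (sum_nonneg fun k hk => hp k (ne_of_mem_erase hk))
  calc ∑ k, x k = x i + ∑ k ∈ univ.erase i, x k := (add_sum_erase _ _ (mem_univ i)).symm
    _ ≤ x i + ∑ k ∈ univ.erase i, p k * x i := by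
        gcongr with k hk
        exact hx k (ne_of_mem_erase hk)
    _ = (1 + ∑ k ∈ univ.erase i, p k) * x i := by rw [← sum_mul]; ring
    _ ≤ (1 + ∑ k ∈ univ.erase i, p k) * φ := by gcongr

theorem tau_lower_bound_phi_general {n : ℕ}
    (A : Matrix (Fin n) (Fin n) ℝ)
    (hA : IsUnit A.det)
    (hinv : ∀ i j, 0 ≤ A⁻¹ i j)
    (p : Fin n → Fin n → ℝ)
    (hp0 : ∀ k i, k ≠ i → 0 ≤ p k i)
    (hpa : ∀ k i, k ≠ i → A⁻¹ k i ≤ p k i * A⁻¹ i i)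
    (hup : ∀ i, A⁻¹ i i ≤ 1 / (A i i - ∑ j ∈ univ.erase i, |A i j| * p j i))
    (hne : (univ : Finset (Fin n)).Nonempty) :
    1 / (univ.sup' hne (fun i => (1 + ∑ k ∈ univ.erase i, p k i) *
        (1 / (A i i - ∑ j ∈ univ.erase i, |A i j| * p j i)))) ≤
      1 / specRad A⁻¹ := by
  have : Nonempty (Fin n) := univ_nonempty_iff.mp hne
  have hA_inv : IsUnit A⁻¹ := isUnit_nonsing_inv_iff.mpr ((isUnit_iff_isUnit_det A).mpr hA)
  refine one_div_le_one_div_of_le (specRad_pos hA_inv) (specRad_le_of_sum_abs_col_le fun i => ?_)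
  simp_rw [abs_of_nonneg (hinv _ i)]
  exact le_sup'_of_le _ (mem_univ i)
    (sum_le_one_add_sum_erase_mul (fun k => hp0 k i) (fun k => hpa k i) (hup i))

/-- Lower bound for `τ(A) = 1/ρ(A⁻¹)` of a strictly diagonally dominant `M`-matrix:
`τ(A) ≥ 1 / max_i { (1 + ∑_{k≠i} p_ki) φ_i }`, where
`φ_i = 1/(a_ii - ∑_{j≠i} |a_ij| p_ji)`. -/
theorem tau_lower_bound_phi {n : ℕ} (hn : 1 ≤ n)
    (A : Matrix (Fin n) (Fin n) ℝ)
    (hA : IsUnit A.det)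
    (hoff : ∀ i j, i ≠ j → A i j ≤ 0)
    (hinv : ∀ i j, 0 ≤ A⁻¹ i j)
    (hsdd : ∀ i, ∑ j ∈ univ.erase i, |A i j| < A i i)
    (p : Fin n → Fin n → ℝ)
    (hp0 : ∀ k i, k ≠ i → 0 ≤ p k i) (hp1 : ∀ k i, k ≠ i → p k i < 1)
    (hpa : ∀ k i, k ≠ i → A⁻¹ k i ≤ p k i * A⁻¹ i i)
    (hup : ∀ i, A⁻¹ i i ≤ 1 / (A i i - ∑ j ∈ univ.erase i, |A i j| * p j i))
    (hne : (univ : Finset (Fin n)).Nonempty) :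
    1 / (univ.sup' hne (fun i => (1 + ∑ k ∈ univ.erase i, p k i) *
        (1 / (A i i - ∑ j ∈ univ.erase i, |A i j| * p j i)))) ≤
      1 / specRad A⁻¹ :=
  tau_lower_bound_phi_general A hA hinv p hp0 hpa hup hne
end
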